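/- Let $A$ be an admissible ring whose topology has the descending chain of open ideals $\{I_i\}_{i\in\mathbb{N}}$ as a basis of neighborhoods of $0$. If $\mathfrak{p}$ is an open prime ideal of $A$ and $S = A \setminus \mathfrak{p}$, then the natural map from the localization-type stalk $A_{\{S\}} := \varinjlim_{x \notin \mathfrak{p}} A_{\{x\}}$ (where $A_{\{x\}} = \varprojlim (A/I_i)_x$ is the complete localization) to its completion $A\{S^{-1}\} := \varprojlim (A/I_i)_{\mathfrak{p}/I_i}$ is a local homomorphism of local rings; in particular both rings are local. -/

import Mathlib

open Filter Topology

/-- The descending chain `I` of ideals is a basis of neighborhoods of `0`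
(this is the `{Iᵢ}`-topology). -/
def IsChainBasis (A : Type*) [CommRing A] [TopologicalSpace A] (I : ℕ → Ideal A) : Prop :=
  Antitone I ∧ ∀ s : Set A, s ∈ nhds (0 : A) ↔ ∃ i, (I i : Set A) ⊆ s

/-- An ideal of definition: an open ideal all of whose elements are topologically nilpotent. -/
def IsIdealOfDefinition (A : Type*) [CommRing A] [TopologicalSpace A] (J : Ideal A) : Prop :=
  IsOpen (J : Set A) ∧ ∀ x ∈ J, Filter.Tendsto (fun n => x ^ n) Filter.atTop (nhds (0 : A))

/-- An admissible ring: a topological ring, linearly topologized with a countable chain of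
ideals as a basis of neighborhoods of `0`, separated, complete, admitting an ideal of
definition. -/
structure IsAdmissible (A : Type*) [CommRing A] [TopologicalSpace A] : Prop where
  topRing : IsTopologicalRing A
  exists_chain : ∃ I : ℕ → Ideal A, IsChainBasis A I
  separated : ∀ x : A, (∀ U ∈ nhds (0 : A), x ∈ U) → x = 0
  complete : ∀ f : ℕ → A,
    (∀ U ∈ nhds (0 : A), ∃ N, ∀ m ≥ N, ∀ n ≥ N, f m - f n ∈ U) →
    ∃ a : A, ∀ U ∈ nhds (0 : A), ∃ N, ∀ n ≥ N, a - f n ∈ U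
  exists_idealOfDef : ∃ J : Ideal A, IsIdealOfDefinition A J

/-- The topology of `A` is the `J`-adic topology: the powers `J ^ n` form a basis of
neighborhoods of `0`. -/
def IsAdicTopology (A : Type*) [CommRing A] [TopologicalSpace A] (J : Ideal A) : Prop :=
  ∀ s : Set A, s ∈ nhds (0 : A) ↔ ∃ n : ℕ, ((J ^ n : Ideal A) : Set A) ⊆ s

section Stalks

variable {A : Type*} [CommRing A] (I : ℕ → Ideal A) (hdesc : ∀ i, I (i + 1) ≤ I i)

/-- Level-`i` piece of the complete localization of `A` by `x`: `(A/Iᵢ)_x`. -/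
noncomputable abbrev levelLoc (x : A) (i : ℕ) : Type _ :=
  Localization.Away (Ideal.Quotient.mk (I i) x)

/-- Transition map `(A/Iᵢ₊₁)_x → (A/Iᵢ)_x`. -/
noncomputable def levelLocTrans (x : A) (i : ℕ) :
    levelLoc I x (i + 1) →+* levelLoc I x i :=
  Localization.awayLift
    ((algebraMap (A ⧸ I i) (Localization.Away (Ideal.Quotient.mk (I i) x))).comp
      (Ideal.Quotient.factor (hdesc i)))
    (Ideal.Quotient.mk (I (i + 1)) x)
    (by rw [RingHom.comp_apply, Ideal.Quotient.factor_mk]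
        exact IsLocalization.Away.algebraMap_isUnit _)

/-- The complete localization `A_{x} = varprojlim (A/Iᵢ)_x`. -/
noncomputable def completeLoc (x : A) : Subring (∀ i, levelLoc I x i) where
  carrier := {g | ∀ i, levelLocTrans I hdesc x i (g (i + 1)) = g i}
  zero_mem' := by intro i; simp
  one_mem' := by intro i; simp
  add_mem' := by intro a b ha hb i; simp [map_add, ha i, hb i]
  mul_mem' := by intro a b ha hb i; simp [map_mul, ha i, hb i]
  neg_mem' := by intro a ha i; simp [map_neg, ha i]

end Stalks

section Stalks2

variable {A : Type*} [CommRing A] (I : ℕ → Ideal A) (hdesc : ∀ i, I (i + 1) ≤ I i)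
  (p : Ideal A)

/-- The index set `S = A ∖ p`, preordered by divisibility. -/
def stalkIndex : Type _ := {x : A // x ∉ p}

instance : Preorder (stalkIndex p) where
  le x y := (x.1 : A) ∣ y.1
  le_refl x := dvd_refl _
  le_trans _ _ _ h h' := dvd_trans h h'

/-- The map `(A/Iᵢ)_x → (A/Iᵢ)_y` for `x ∣ y`. -/
noncomputable def levelLocMap (x y : A) (hxy : x ∣ y) (i : ℕ) :
    levelLoc I x i →+* levelLoc I y i :=
  Localization.awayLift
    (algebraMap (A ⧸ I i) (Localization.Away (Ideal.Quotient.mk (I i) y)))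
    (Ideal.Quotient.mk (I i) x)
    (isUnit_of_dvd_unit (map_dvd _ (map_dvd _ hxy))
      (IsLocalization.Away.algebraMap_isUnit _))

/-- The transition map `A_{x} → A_{y}` of complete localizations, for `x ∣ y`. -/
noncomputable def completeLocMap (x y : A) (hxy : x ∣ y) :
    completeLoc I hdesc x →+* completeLoc I hdesc y :=
  RingHom.codRestrict
    ((Pi.ringHom fun i => (levelLocMap I x y hxy i).comp
        (Pi.evalRingHom (levelLoc I x) i)).comp (Subring.subtype _))
    _
    (fun g i => by
      have hsq : (levelLocTrans I hdesc y i).comp (levelLocMap I x y hxy (i + 1)) =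
          (levelLocMap I x y hxy i).comp (levelLocTrans I hdesc x i) := by
        refine IsLocalization.ringHom_ext
          (Submonoid.powers (Ideal.Quotient.mk (I (i + 1)) x)) ?_
        ext a
        simp [levelLocTrans, levelLocMap, Localization.awayLift,
          IsLocalization.Away.lift, IsLocalization.lift_eq]
      have hg := g.2 i
      have := congrArg (fun h : levelLoc I x (i + 1) →+* levelLoc I y i => h (g.1 (i + 1)))
        hsq
      exact this.trans (congrArg (levelLocMap I x y hxy i)
        (g.2 i : levelLocTrans I hdesc x i (g.1 (i + 1)) = g.1 i)))

end Stalks2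

section Stalks3

variable {A : Type*} [CommRing A] (I : ℕ → Ideal A) (hdesc : ∀ i, I (i + 1) ≤ I i)
  (p : Ideal A) [hp : p.IsPrime]

/-- Level-`i` piece of the completed stalk `A{S⁻¹}`: the localization of `A/Iᵢ` at the
image of `S = A ∖ p`. -/
noncomputable abbrev pLev (i : ℕ) : Type _ :=
  Localization ((p.primeCompl).map (Ideal.Quotient.mk (I i)))

/-- Transition map `(A/Iᵢ₊₁)_{p/Iᵢ₊₁} → (A/Iᵢ)_{p/Iᵢ}`. -/
noncomputable def pTrans (i : ℕ) : pLev I p (i + 1) →+* pLev I p i :=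
  IsLocalization.lift (M := (p.primeCompl).map (Ideal.Quotient.mk (I (i + 1))))
    (g := (algebraMap (A ⧸ I i) (pLev I p i)).comp
      (Ideal.Quotient.factor (hdesc i)))
    (fun y => by
      obtain ⟨s, hs, hy⟩ := y.2
      rw [RingHom.comp_apply]
      have h : Ideal.Quotient.factor (hdesc i) y.1 =
          Ideal.Quotient.mk (I i) s := by
        rw [← hy, Ideal.Quotient.factor_mk]
      rw [h]
      exact IsLocalization.map_units _
        ⟨Ideal.Quotient.mk (I i) s, Submonoid.mem_map_of_mem _ hs⟩)

/-- The fine stalk `A{S⁻¹} = varprojlim (A/Iᵢ)_{p/Iᵢ}`. -/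
noncomputable def pLim : Subring (∀ i, pLev I p i) where
  carrier := {g | ∀ i, pTrans I hdesc p i (g (i + 1)) = g i}
  zero_mem' := by intro i; simp
  one_mem' := by intro i; simp
  add_mem' := by intro a b ha hb i; simp [map_add, ha i, hb i]
  mul_mem' := by intro a b ha hb i; simp [map_mul, ha i, hb i]
  neg_mem' := by intro a ha i; simp [map_neg, ha i]

/-- Level-`i` canonical map `(A/Iᵢ)_x → (A/Iᵢ)_{p/Iᵢ}` for `x ∉ p`. -/
noncomputable def canLev (x : A) (hx : x ∈ p.primeCompl) (i : ℕ) :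
    levelLoc I x i →+* pLev I p i :=
  Localization.awayLift (algebraMap (A ⧸ I i) (pLev I p i)) (Ideal.Quotient.mk (I i) x)
    (IsLocalization.map_units _
      ⟨Ideal.Quotient.mk (I i) x, Submonoid.mem_map_of_mem _ hx⟩)

/-- The canonical map `A_{x} → A{S⁻¹}` for `x ∉ p`. -/
noncomputable def canMap (x : A) (hx : x ∈ p.primeCompl) :
    completeLoc I hdesc x →+* pLim I hdesc p :=
  RingHom.codRestrict
    ((Pi.ringHom fun i => (canLev I p x hx i).comp
        (Pi.evalRingHom (levelLoc I x) i)).comp (Subring.subtype _))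
    _
    (fun g i => by
      have hsq : (pTrans I hdesc p i).comp (canLev I p x hx (i + 1)) =
          (canLev I p x hx i).comp (levelLocTrans I hdesc x i) := by
        refine IsLocalization.ringHom_ext
          (Submonoid.powers (Ideal.Quotient.mk (I (i + 1)) x)) ?_
        ext a
        simp [pTrans, canLev, levelLocTrans, Localization.awayLift,
          IsLocalization.Away.lift, IsLocalization.lift_eq]
      have hg := g.2 i
      have := congrArg (fun h : levelLoc I x (i + 1) →+* pLev I p i => h (g.1 (i + 1))) hsq
      exact this.trans (congrArg (canLev I p x hx i)
        (g.2 i : levelLocTrans I hdesc x i (g.1 (i + 1)) = g.1 i)))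

end Stalks3

/-!
Choose `i₀` with `I i₀ ⊆ J ∩ p`, where `J` is an ideal of definition. For `i ≥ i₀` the kernel
`Iᵢ / Iᵢ₊₁` of `A/Iᵢ₊₁ → A/Iᵢ` consists of topologically nilpotent, hence nilpotent, elements,
so this surjection and all its localizations reflect units. Therefore an element of one of the
inverse limits `A_{x}` or `A{S⁻¹}` is a unit as soon as its component at level `i₀` is. As
`I i₀ ⊆ p`, that component of `A{S⁻¹}` lives in the local ring `(A/I_{i₀})_{p/I_{i₀}}`, so
`A{S⁻¹}` is local. If `g ∈ A_{x}` maps to a unit there, then `g_{i₀} = a / xⁿ` with `a ∉ p`, and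
`g` is already a unit in `A_{xa}`: the natural map reflects units, and `A_{S}` is local as well.
-/

theorem RingHom.isLocalHom_of_surjective_of_ker_le_nilradical {R S : Type*} [CommRing R]
    [CommRing S] (f : R →+* S) (hf : Function.Surjective f)
    (hker : RingHom.ker f ≤ nilradical R) : IsLocalHom f where
  map_nonunit r hr := by
    obtain ⟨s, hs⟩ := hf ↑hr.unit⁻¹
    have hnil : IsNilpotent (1 - r * s) := mem_nilradical.1 <| hker <| by
      rw [RingHom.mem_ker, map_sub, map_one, map_mul, hs, hr.mul_val_inv, sub_self]
    exact isUnit_of_mul_isUnit_left (by simpa using hnil.isUnit_one_sub)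

theorem IsLocalization.isLocalHom_map_of_surjective {R S P Q : Type*} [CommRing R] [CommRing S]
    [CommRing P] [CommRing Q] [Algebra R S] [Algebra P Q] {M : Submonoid R} {T : Submonoid P}
    [IsLocalization M S] [IsLocalization T Q] {g : R →+* P} (hg : Function.Surjective g)
    (hker : RingHom.ker g ≤ nilradical R) (hT : M.map g = T) :
    IsLocalHom (IsLocalization.map Q g (hT.symm ▸ M.le_comap_map) : S →+* Q) := by
  subst hT
  refine RingHom.isLocalHom_of_surjective_of_ker_le_nilradical _
    (IsLocalization.map_surjective_of_surjective M S Q hg) ?_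
  rw [IsLocalization.ker_map Q g rfl, Ideal.map_le_iff_le_comap]
  exact fun b hb => mem_nilradical.2 ((mem_nilradical.1 (hker hb)).map (algebraMap R S))

theorem IsLocalization.isUnit_map_mk'_iff {R S T : Type*} [CommRing R] [CommRing S] [CommRing T]
    [Algebra R S] (M : Submonoid R) [IsLocalization M S] (φ : S →+* T) (r : R) (s : M) :
    IsUnit (φ (IsLocalization.mk' S r s)) ↔ IsUnit (φ (algebraMap R S r)) := by
  rw [← IsLocalization.mk'_spec S r s, map_mul,
    IsUnit.mul_iff, and_iff_left ((IsLocalization.map_units S s).map φ)]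

theorem IsLocalRing.of_isLocalHom {R S : Type*} [CommRing R] [Nontrivial R] [CommRing S]
    [IsLocalRing S] (f : R →+* S) [IsLocalHom f] : IsLocalRing R :=
  of_isUnit_or_isUnit_one_sub_self fun a =>
    (isUnit_or_isUnit_one_sub_self (f a)).imp (isUnit_of_map_unit f a)
      fun h => isUnit_of_map_unit f _ (by rwa [map_sub, map_one])

theorem Ideal.map_mk_primeCompl {R : Type*} [CommRing R] {I p : Ideal R} [p.IsPrime]
    [(p.map (Ideal.Quotient.mk I)).IsPrime] (h : I ≤ p) :
    p.primeCompl.map (Ideal.Quotient.mk I) = (p.map (Ideal.Quotient.mk I)).primeCompl := by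
  rw [← Ideal.map_primeCompl_comap_of_surjective (f := Ideal.Quotient.mk I)
    Ideal.Quotient.mk_surjective]
  congr!
  exact (Ideal.comap_map_mk h).symm

section InverseLimit

variable {R : ℕ → Type*} [∀ i, CommRing (R i)] {f : ∀ i, R (i + 1) →+* R i}

theorem isUnit_apply_of_isLocalHom {g : ∀ i, R i} (hg : ∀ i, f i (g (i + 1)) = g i) {i₀ : ℕ}
    (hf : ∀ i, i₀ ≤ i → IsLocalHom (f i)) (h : IsUnit (g i₀)) (i : ℕ) : IsUnit (g i) := by
  rcases le_total i i₀ with hi | hi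
  · clear hf
    induction i₀, hi using Nat.le_induction with
    | base => exact h
    | succ n _ ih => exact ih (hg n ▸ h.map (f n))
  · induction i, hi using Nat.le_induction with
    | base => exact h
    | succ n hn ih => exact (hf n hn).map_nonunit _ (by rw [hg]; exact ih)

theorem isUnit_of_forall_isUnit_apply {S : Subring (∀ i, R i)}
    (hS : ∀ g, g ∈ S ↔ ∀ i, f i (g (i + 1)) = g i) {g : S} (h : ∀ i, IsUnit (g.1 i)) :
    IsUnit g := by
  have hg := (hS g.1).1 g.2
  refine IsUnit.of_mul_eq_one (a := g) ⟨fun i => ↑(h i).unit⁻¹, (hS _).2 fun i => ?_⟩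
    (Subtype.ext (funext fun i => (h i).mul_val_inv))
  refine (h i).mul_left_cancel ?_
  rw [(h i).mul_val_inv, ← hg i, ← map_mul, (h (i + 1)).mul_val_inv, map_one]

theorem isLocalHom_evalRingHom_comp_subtype {S : Subring (∀ i, R i)}
    (hS : ∀ g, g ∈ S ↔ ∀ i, f i (g (i + 1)) = g i) {i₀ : ℕ}
    (hf : ∀ i, i₀ ≤ i → IsLocalHom (f i)) :
    IsLocalHom ((Pi.evalRingHom R i₀).comp S.subtype) where
  map_nonunit g h := isUnit_of_forall_isUnit_apply hS
    (isUnit_apply_of_isLocalHom ((hS g.1).1 g.2) hf h)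

end InverseLimit

theorem ker_factor_le_nilradical {A : Type*} [CommRing A] [TopologicalSpace A] {K L : Ideal A}
    (hKL : K ≤ L) (hK : (K : Set A) ∈ 𝓝 0)
    (hL : ∀ w ∈ L, Tendsto (fun n => w ^ n) atTop (𝓝 0)) :
    RingHom.ker (Ideal.Quotient.factor hKL) ≤ nilradical (A ⧸ K) := by
  intro b hb
  obtain ⟨w, rfl⟩ := Ideal.Quotient.mk_surjective b
  rw [RingHom.mem_ker, Ideal.Quotient.factor_mk, Ideal.Quotient.eq_zero_iff_mem] at hb
  obtain ⟨n, hn⟩ := ((hL w hb).eventually_mem hK).exists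
  exact mem_nilradical.2 ⟨n, by rw [← map_pow, Ideal.Quotient.eq_zero_iff_mem]; exact hn⟩

theorem IsChainBasis.mem_nhds {A : Type*} [CommRing A] [TopologicalSpace A] {I : ℕ → Ideal A}
    (hI : IsChainBasis A I) (i : ℕ) : (I i : Set A) ∈ 𝓝 0 :=
  (hI.2 _).2 ⟨i, subset_rfl⟩

theorem IsChainBasis.eventually_le {A : Type*} [CommRing A] [TopologicalSpace A]
    {I : ℕ → Ideal A} (hI : IsChainBasis A I) {U : Ideal A} (hU : IsOpen (U : Set A)) :
    ∀ᶠ i in atTop, I i ≤ U := by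
  obtain ⟨i, hi⟩ := (hI.2 U).1 (hU.mem_nhds U.zero_mem)
  exact eventually_atTop.2 ⟨i, fun j hj => (hI.1 hj).trans hi⟩

section Stalk

variable {A : Type*} [CommRing A] (I : ℕ → Ideal A) (hdesc : ∀ i, I (i + 1) ≤ I i)
  (p : Ideal A) [p.IsPrime]

instance : Nonempty (stalkIndex p) :=
  ⟨⟨1, p.primeCompl.one_mem⟩⟩

instance : IsDirected (stalkIndex p) (· ≤ ·) :=
  ⟨fun x y => ⟨⟨x.1 * y.1, p.primeCompl.mul_mem x.2 y.2⟩, dvd_mul_right _ _, dvd_mul_left _ _⟩⟩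

@[simp]
theorem levelLocMap_algebraMap (x y : A) (hxy : x ∣ y) (i : ℕ) (b : A ⧸ I i) :
    levelLocMap I x y hxy i (algebraMap _ _ b) = algebraMap _ _ b := by
  simp [levelLocMap, Localization.awayLift, IsLocalization.Away.lift]

@[simp]
theorem canLev_algebraMap (x : A) (hx : x ∈ p.primeCompl) (i : ℕ) (b : A ⧸ I i) :
    canLev I p x hx i (algebraMap _ _ b) = algebraMap _ _ b := by
  simp [canLev, Localization.awayLift, IsLocalization.Away.lift]

theorem canLev_comp_levelLocMap {x y : A} (hx : x ∈ p.primeCompl) (hy : y ∈ p.primeCompl)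
    (hxy : x ∣ y) (i : ℕ) :
    (canLev I p y hy i).comp (levelLocMap I x y hxy i) = canLev I p x hx i :=
  IsLocalization.ringHom_ext (Submonoid.powers (Ideal.Quotient.mk (I i) x))
    (RingHom.ext fun b => by simp)

theorem canMap_completeLocMap (x y : stalkIndex p) (hxy : x ≤ y) (g : completeLoc I hdesc x.1) :
    canMap I hdesc p y.1 y.2 (completeLocMap I hdesc x.1 y.1 hxy g) =
      canMap I hdesc p x.1 x.2 g :=
  Subtype.ext (funext fun i => RingHom.congr_fun (canLev_comp_levelLocMap I p x.2 y.2 hxy i) _)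

theorem isLocalHom_levelLocTrans (x : A) {i : ℕ}
    (hker : RingHom.ker (Ideal.Quotient.factor (hdesc i)) ≤ nilradical (A ⧸ I (i + 1))) :
    IsLocalHom (levelLocTrans I hdesc x i) := by
  have hT : (Submonoid.powers (Ideal.Quotient.mk (I (i + 1)) x)).map
      (Ideal.Quotient.factor (hdesc i)) = Submonoid.powers (Ideal.Quotient.mk (I i) x) := by
    rw [Submonoid.map_powers, Ideal.Quotient.factor_mk]
  have heq : levelLocTrans I hdesc x i = IsLocalization.map (levelLoc I x i)
      (Ideal.Quotient.factor (hdesc i)) (Submonoid.map_le_iff_le_comap.1 hT.le) :=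
    IsLocalization.ringHom_ext (Submonoid.powers (Ideal.Quotient.mk (I (i + 1)) x))
      (RingHom.ext fun b => by
        simp [levelLocTrans, Localization.awayLift, IsLocalization.Away.lift])
  rw [heq]
  exact IsLocalization.isLocalHom_map_of_surjective (Ideal.Quotient.factor_surjective _) hker hT

theorem isLocalHom_pTrans {i : ℕ}
    (hker : RingHom.ker (Ideal.Quotient.factor (hdesc i)) ≤ nilradical (A ⧸ I (i + 1))) :
    IsLocalHom (pTrans I hdesc p i) := by
  have hT : (p.primeCompl.map (Ideal.Quotient.mk (I (i + 1)))).map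
      (Ideal.Quotient.factor (hdesc i)) = p.primeCompl.map (Ideal.Quotient.mk (I i)) := by
    ext b
    simp
  have heq : pTrans I hdesc p i = IsLocalization.map (pLev I p i)
      (Ideal.Quotient.factor (hdesc i)) (Submonoid.map_le_iff_le_comap.1 hT.le) :=
    IsLocalization.ringHom_ext (p.primeCompl.map (Ideal.Quotient.mk (I (i + 1))))
      (RingHom.ext fun b => by simp [pTrans])
  rw [heq]
  exact IsLocalization.isLocalHom_map_of_surjective (Ideal.Quotient.factor_surjective _) hker hT

variable {i₀ : ℕ}

theorem isLocalRing_pLev (hIp : I i₀ ≤ p) : IsLocalRing (pLev I p i₀) := by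
  have := Ideal.isPrime_map_quotientMk_of_isPrime hIp
  show IsLocalRing (Localization _)
  rw [Ideal.map_mk_primeCompl hIp]
  infer_instance

theorem isUnit_algebraMap_pLev_iff (hIp : I i₀ ≤ p) (a : A) :
    IsUnit (algebraMap (A ⧸ I i₀) (pLev I p i₀) (Ideal.Quotient.mk (I i₀) a)) ↔ a ∉ p := by
  have := Ideal.isPrime_map_quotientMk_of_isPrime hIp
  have : IsLocalization.AtPrime (pLev I p i₀) (p.map (Ideal.Quotient.mk (I i₀))) := by
    rw [IsLocalization.AtPrime, ← Ideal.map_mk_primeCompl hIp]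
    exact Localization.isLocalization
  rw [IsLocalization.AtPrime.isUnit_to_map_iff _ (p.map (Ideal.Quotient.mk (I i₀))),
    Ideal.mem_primeCompl_iff, Ideal.mem_quotient_iff_mem hIp]

theorem exists_isUnit_completeLocMap_apply (hIp : I i₀ ≤ p) {x : A} (hx : x ∈ p.primeCompl)
    (g : completeLoc I hdesc x) (hg : IsUnit (canLev I p x hx i₀ (g.1 i₀))) :
    ∃ a ∉ p, IsUnit ((completeLocMap I hdesc x (x * a) (dvd_mul_right x a) g).1 i₀) := by
  obtain ⟨b, s, hbs⟩ :=
    IsLocalization.exists_mk'_eq (Submonoid.powers (Ideal.Quotient.mk (I i₀) x)) (g.1 i₀)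
  obtain ⟨a, rfl⟩ := Ideal.Quotient.mk_surjective b
  rw [← hbs, IsLocalization.isUnit_map_mk'_iff, canLev_algebraMap,
    isUnit_algebraMap_pLev_iff I p hIp] at hg
  refine ⟨a, hg, ?_⟩
  change IsUnit (levelLocMap I x (x * a) (dvd_mul_right x a) i₀ (g.1 i₀))
  rw [← hbs, IsLocalization.isUnit_map_mk'_iff, levelLocMap_algebraMap]
  exact isUnit_of_dvd_unit (map_dvd _ (map_dvd _ (dvd_mul_left a x)))
    (IsLocalization.Away.algebraMap_isUnit _)

variable (i₀) in
def HasNilTransitionsFrom : Prop :=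
  ∀ i, i₀ ≤ i → RingHom.ker (Ideal.Quotient.factor (hdesc i)) ≤ nilradical (A ⧸ I (i + 1))

abbrev stalk : Type _ :=
  Ring.DirectLimit (fun x : stalkIndex p => completeLoc I hdesc x.1)
    (fun x y hxy => completeLocMap I hdesc x.1 y.1 hxy)

noncomputable def stalkToPLim : stalk I hdesc p →+* pLim I hdesc p :=
  Ring.DirectLimit.lift _ _ _ (fun x => canMap I hdesc p x.1 x.2) (canMap_completeLocMap I hdesc p)

theorem stalkToPLim_comp_of (x : stalkIndex p) :
    (stalkToPLim I hdesc p).comp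
        (Ring.DirectLimit.of (fun x : stalkIndex p => completeLoc I hdesc x.1)
          (fun x y hxy => completeLocMap I hdesc x.1 y.1 hxy) x) =
      canMap I hdesc p x.1 x.2 :=
  RingHom.ext fun g => by simp only [stalkToPLim, RingHom.comp_apply, Ring.DirectLimit.lift_of]

theorem isUnit_of_isUnit_canLev (hnil : HasNilTransitionsFrom I hdesc i₀) (hIp : I i₀ ≤ p)
    (x : stalkIndex p) (g : completeLoc I hdesc x.1)
    (hg : IsUnit (canLev I p x.1 x.2 i₀ (g.1 i₀))) :
    IsUnit (Ring.DirectLimit.of (fun x : stalkIndex p => completeLoc I hdesc x.1)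
      (fun x y hxy => completeLocMap I hdesc x.1 y.1 hxy) x g) := by
  obtain ⟨a, ha, hunit⟩ := exists_isUnit_completeLocMap_apply I hdesc p hIp x.2 g hg
  have := isLocalHom_evalRingHom_comp_subtype (S := completeLoc I hdesc (x.1 * a))
    (fun _ => Iff.rfl) fun i hi => isLocalHom_levelLocTrans I hdesc _ (hnil i hi)
  rw [← Ring.DirectLimit.of_f (i := x) (j := ⟨x.1 * a, p.primeCompl.mul_mem x.2 ha⟩)
    (hij := dvd_mul_right x.1 a)]
  exact (isUnit_of_map_unit ((Pi.evalRingHom (levelLoc I (x.1 * a)) i₀).comp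
    (completeLoc I hdesc (x.1 * a)).subtype) _ hunit).map _

theorem isLocalHom_of_comp_of_eq_canMap (hnil : HasNilTransitionsFrom I hdesc i₀)
    (hIp : I i₀ ≤ p) (ψ : stalk I hdesc p →+* pLim I hdesc p)
    (hψ : ∀ x : stalkIndex p, ψ.comp (Ring.DirectLimit.of _ _ x) = canMap I hdesc p x.1 x.2) :
    IsLocalHom ψ where
  map_nonunit z hz := by
    obtain ⟨x, g, rfl⟩ := Ring.DirectLimit.exists_of z
    rw [← RingHom.comp_apply, hψ] at hz
    exact isUnit_of_isUnit_canLev I hdesc p hnil hIp x g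
      (hz.map ((Pi.evalRingHom (pLev I p) i₀).comp (pLim I hdesc p).subtype))

theorem isLocalRing_pLim (hnil : HasNilTransitionsFrom I hdesc i₀) (hIp : I i₀ ≤ p) :
    IsLocalRing (pLim I hdesc p) := by
  have := isLocalRing_pLev I p hIp
  have := isLocalHom_evalRingHom_comp_subtype (S := pLim I hdesc p)
    (fun _ => Iff.rfl) fun i hi => isLocalHom_pTrans I hdesc p (hnil i hi)
  have := ((Pi.evalRingHom (pLev I p) i₀).comp (pLim I hdesc p).subtype).domain_nontrivial
  exact IsLocalRing.of_isLocalHom ((Pi.evalRingHom (pLev I p) i₀).comp (pLim I hdesc p).subtype)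

theorem isLocalRing_stalk (hnil : HasNilTransitionsFrom I hdesc i₀) (hIp : I i₀ ≤ p) :
    IsLocalRing (stalk I hdesc p) := by
  have := isLocalRing_pLim I hdesc p hnil hIp
  have := isLocalHom_of_comp_of_eq_canMap I hdesc p hnil hIp _ (stalkToPLim_comp_of I hdesc p)
  have := (stalkToPLim I hdesc p).domain_nontrivial
  exact IsLocalRing.of_isLocalHom (stalkToPLim I hdesc p)

end Stalk

/-- For an admissible ring `A` with chain basis `{Iᵢ}` and an open prime ideal `p` with
complement `S`, the stalk `A_{S} = varinjlim_{x ∉ p} A_{x}` and its completion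
`A{S⁻¹} = varprojlim (A/Iᵢ)_{p/Iᵢ}` are local rings, and the natural map between them
(i.e. any ring homomorphism commuting with the canonical maps from the `A_{x}`) is a local
homomorphism. -/
theorem stmt_15 (A : Type*) [CommRing A] [TopologicalSpace A] (hA : IsAdmissible A)
    (I : ℕ → Ideal A) (hbasis : IsChainBasis A I) (hdesc : ∀ i, I (i + 1) ≤ I i)
    (p : Ideal A) [hp : p.IsPrime] (hpopen : IsOpen (p : Set A)) :
    IsLocalRing (Ring.DirectLimit (fun x : stalkIndex p => completeLoc I hdesc x.1)
      (fun x y hxy => completeLocMap I hdesc x.1 y.1 hxy)) ∧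
    IsLocalRing (pLim I hdesc p) ∧
    ∀ ψ : Ring.DirectLimit (fun x : stalkIndex p => completeLoc I hdesc x.1)
        (fun x y hxy => completeLocMap I hdesc x.1 y.1 hxy) →+* pLim I hdesc p,
      (∀ x : stalkIndex p,
        ψ.comp (Ring.DirectLimit.of (fun x : stalkIndex p => completeLoc I hdesc x.1)
          (fun x y hxy => completeLocMap I hdesc x.1 y.1 hxy) x) = canMap I hdesc p x.1 x.2) →
      IsLocalHom ψ := by
  obtain ⟨J, hJ⟩ := hA.exists_idealOfDef
  obtain ⟨i₀, hi₀⟩ :=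
    eventually_atTop.1 ((hbasis.eventually_le hJ.1).and (hbasis.eventually_le hpopen))
  have hnil : HasNilTransitionsFrom I hdesc i₀ := fun i hi =>
    ker_factor_le_nilradical (hdesc i) (hbasis.mem_nhds _) fun w hw => hJ.2 w ((hi₀ i hi).1 hw)
  have hIp : I i₀ ≤ p := (hi₀ i₀ le_rfl).2
  exact ⟨isLocalRing_stalk I hdesc p hnil hIp, isLocalRing_pLim I hdesc p hnil hIp,
    isLocalHom_of_comp_of_eq_canMap I hdesc p hnil hIp⟩
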